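/- In a maxiconsistent base M, the defined existential quantifier is witnessed by closed terms: M supports ∃x φ (defined as ¬∀x ¬φ) if and only if M supports φ[x↦t] for some closed term t. -/
import Mathlib

namespace PTS

/-- An atomic rule: finitely many atomic premises and an atomic conclusion. -/
structure ARule (Atom : Type) where
  prems : List Atom
  concl : Atom

/-- A base is a set of atomic rules. -/
abbrev Base (Atom : Type) := Set (ARule Atom)

/-- Atomic derivability from a base, closing the rules under application. -/
inductive ADeriv {Atom : Type} (B : Base Atom) : Atom → Prop
  | app (r : ARule Atom) (hr : r ∈ B) (h : ∀ p ∈ r.prems, ADeriv B p) : ADeriv B r.concl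

/-- Closed formulas over atoms `Atom` and closed terms `TermC`; the universal
quantifier is represented by its family of closed-term instances. -/
inductive Fml (Atom TermC : Type) : Type
  | atom : Atom → Fml Atom TermC
  | falsum : Fml Atom TermC
  | and : Fml Atom TermC → Fml Atom TermC → Fml Atom TermC
  | imp : Fml Atom TermC → Fml Atom TermC → Fml Atom TermC
  | all : (TermC → Fml Atom TermC) → Fml Atom TermC

/-- The support relation. -/
def Spt {Atom TermC : Type} (B : Base Atom) : Fml Atom TermC → Prop
  | .atom a => ADeriv B a
  | .falsum => ∀ a : Atom, ADeriv B a
  | .and φ ψ => Spt B φ ∧ Spt B ψ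
  | .imp φ ψ => ∀ C : Base Atom, B ⊆ C → Spt C φ → Spt C ψ
  | .all f => ∀ t : TermC, Spt B (f t)

def Fml.neg {Atom TermC : Type} (φ : Fml Atom TermC) : Fml Atom TermC := φ.imp .falsum

def Fml.or {Atom TermC : Type} (φ ψ : Fml Atom TermC) : Fml Atom TermC := (φ.neg.and ψ.neg).neg

def Fml.ex {Atom TermC : Type} (f : TermC → Fml Atom TermC) : Fml Atom TermC :=
  (Fml.all fun t => (f t).neg).neg

/-- A base is consistent when it does not support `⊥`. -/
def Consistent (Atom TermC : Type) (B : Base Atom) : Prop :=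
  ¬ Spt B (Fml.falsum : Fml Atom TermC)

/-- A maxiconsistent base: consistent, and every proper extension is inconsistent. -/
def Maxiconsistent (Atom TermC : Type) (B : Base Atom) : Prop :=
  Consistent Atom TermC B ∧ ∀ C : Base Atom, B ⊆ C → C ≠ B → ¬ Consistent Atom TermC C

end PTS

open PTS

lemma maxi_neg_iff {Atom TermC : Type} {M : Base Atom}
    (hM : Maxiconsistent Atom TermC M) (φ : Fml Atom TermC) :
    Spt M φ.neg ↔ ¬ Spt M φ := by
  constructor
  · intro h hφ
    exact hM.1 (h M (le_refl _) hφ)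
  · intro h C hMC hφ
    by_cases hC : C = M
    · subst hC; exact absurd hφ h
    · by_contra hcon
      exact hM.2 C hMC hC hcon

theorem maxiconsistent_ex_iff {Atom TermC : Type} {M : Base Atom}
    (hM : Maxiconsistent Atom TermC M) (f : TermC → Fml Atom TermC) :
    Spt M (Fml.ex f) ↔ ∃ t : TermC, Spt M (f t) := by
  rw [Fml.ex, maxi_neg_iff hM]
  have : Spt M (Fml.all fun t => (f t).neg) ↔ ∀ t, ¬ Spt M (f t) := by
    constructor
    · intro h t
      exact (maxi_neg_iff hM (f t)).1 (h t)
    · intro h t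
      exact (maxi_neg_iff hM (f t)).2 (h t)
  rw [this]
  push_neg
  rfl
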